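/- For every i with 0 ≤ i ≤ s, the linear subspace 𝔫_i = span_K{y_η : η ∈ A_i} is a Lie subalgebra of 𝔫 (and hence ℒ_i = 𝔫_i/𝔪 is a Lie subalgebra of ℒ). Equivalently, in purely combinatorial terms: if (a,b) ∈ B_i and (b,c) ∈ B_i with a > b > c, then (a,c) ∈ B_i ⊔ M. -/

import Mathlib

/-!
Closedness of `B_i` under `(a,b), (b,c) ↦ (a,c)` modulo `M` is preserved by each step. Let
`(a,b), (b,c)` survive the step filling `ξ = (k,t)`; by induction `(a,c) ∈ B_{i-1} ∪ M`. If
`(a,c) = ξ`, then `(a,b)` would have received `−`. If `(a,c)` receives `−`, then `a = k` and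
`(b,t) ∈ B_{i-1} ∪ M`; the ideal property rules out `(b,t) ∈ M` (it would give `ξ ∈ M`), so
again `(a,b)` would have received `−`. Symmetrically, a `+` on `(a,c)` forces one on `(b,c)`.
-/

open Finset MvPolynomial

namespace Panov

/-- The set `A` of places `(i,j)` with `n ≥ i > j ≥ 1`. -/
def placesA (n : ℕ) : Finset (ℕ × ℕ) :=
  (Finset.range (n + 1) ×ˢ Finset.range (n + 1)).filter fun p => 1 ≤ p.2 ∧ p.2 < p.1

/-- The rank of a place in the linear order `≻`:
`η ≻ ζ` iff `ordA n η < ordA n ζ`. -/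
def ordA (n : ℕ) (p : ℕ × ℕ) : ℕ := p.2 * (n + 1) + (n - p.1)

/-- The `≻`-greatest element of a (nonempty) set `B` of places:
the element with the minimal value of `ordA`. -/
def xiOf (n : ℕ) (B : Finset (ℕ × ℕ)) : ℕ × ℕ :=
  let m := WithTop.untopD 0 ((B.image (ordA n)).min)
  (n - m % (n + 1), m / (n + 1))

/-- The places that get the symbol `−` at the current step, when the
current set of unfilled places is `B`. -/
def minusSet (n : ℕ) (B : Finset (ℕ × ℕ)) : Finset (ℕ × ℕ) :=
  B.filter fun p =>
    p.1 = (xiOf n B).1 ∧ (xiOf n B).2 < p.2 ∧ p.2 < (xiOf n B).1 ∧ (p.2, (xiOf n B).2) ∈ B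

/-- The places that get the symbol `+` at the current step. -/
def plusSet (n : ℕ) (B : Finset (ℕ × ℕ)) : Finset (ℕ × ℕ) :=
  B.filter fun p =>
    p.2 = (xiOf n B).2 ∧ (xiOf n B).2 < p.1 ∧ p.1 < (xiOf n B).1 ∧ ((xiOf n B).1, p.1) ∈ B

/-- `Bset n M i` is the set of places unfilled after step `i` of the diagram. -/
def Bset (n : ℕ) (M : Finset (ℕ × ℕ)) : ℕ → Finset (ℕ × ℕ)
  | 0 => placesA n \ M
  | i + 1 =>
      Bset n M i \
        insert (xiOf n (Bset n M i)) (minusSet n (Bset n M i) ∪ plusSet n (Bset n M i))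

/-- `ξ_i`, the place that receives `⊗` at step `i ≥ 1`. -/
def xiStep (n : ℕ) (M : Finset (ℕ × ℕ)) (i : ℕ) : ℕ × ℕ := xiOf n (Bset n M (i - 1))

/-- `C_i⁻`, the places filled with `−` at step `i ≥ 1`. -/
def Cminus (n : ℕ) (M : Finset (ℕ × ℕ)) (i : ℕ) : Finset (ℕ × ℕ) :=
  minusSet n (Bset n M (i - 1))

/-- `C_i⁺`, the places filled with `+` at step `i ≥ 1`. -/
def Cplus (n : ℕ) (M : Finset (ℕ × ℕ)) (i : ℕ) : Finset (ℕ × ℕ) :=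
  plusSet n (Bset n M (i - 1))

/-- `M ⊆ A` spans an ideal `𝔪` of `𝔫 = ut(n,K)`. -/
def IsIdealSet (n : ℕ) (M : Finset (ℕ × ℕ)) : Prop :=
  M ⊆ placesA n ∧
    (∀ p ∈ M, ∀ d, 1 ≤ d → d < p.2 → (p.1, d) ∈ M) ∧
    (∀ p ∈ M, ∀ c, p.1 < c → c ≤ n → (c, p.2) ∈ M)

/-- `s` is the number of steps after which the diagram is complete. -/
def IsNumSteps (n : ℕ) (M : Finset (ℕ × ℕ)) (s : ℕ) : Prop :=
  Bset n M s = ∅ ∧ ∀ j < s, (Bset n M j).Nonempty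

/-- For `B ⊆ A` and `M` spanning an ideal, this says that `span{y_η : η ∈ B ∪ M}` is a
Lie subalgebra of `𝔫`. -/
def IsCompClosedMod (M B : Finset (ℕ × ℕ)) : Prop :=
  ∀ ⦃a b c : ℕ⦄, (a, b) ∈ B → (b, c) ∈ B → (a, c) ∈ B ∪ M

variable {n : ℕ} {M B : Finset (ℕ × ℕ)}

theorem mem_placesA {p : ℕ × ℕ} : p ∈ placesA n ↔ 1 ≤ p.2 ∧ p.2 < p.1 ∧ p.1 ≤ n := by
  simp only [placesA, mem_filter, mem_product, mem_range]
  omega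

theorem Bset_subset_placesA_sdiff (i : ℕ) : Bset n M i ⊆ placesA n \ M := by
  induction i with
  | zero => exact Subset.refl _
  | succ i ih => exact sdiff_subset.trans ih

theorem ordA_decode {p : ℕ × ℕ} (hp : p.1 ≤ n) :
    (n - ordA n p % (n + 1), ordA n p / (n + 1)) = p := by
  have hlt : n - p.1 < n + 1 := by omega
  have hmod : ordA n p % (n + 1) = n - p.1 := by
    rw [ordA, Nat.mul_add_mod_of_lt hlt]
  have hdiv : ordA n p / (n + 1) = p.2 := by
    rw [ordA, Nat.add_comm, Nat.add_mul_div_right _ _ n.succ_pos, Nat.div_eq_of_lt hlt, zero_add]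
  rw [hmod, hdiv, Nat.sub_sub_self hp]

theorem xiOf_mem (hB : B ⊆ placesA n) (hne : B.Nonempty) : xiOf n B ∈ B := by
  obtain ⟨m, hm⟩ := Finset.min_of_nonempty (hne.image (ordA n))
  obtain ⟨q, hq, rfl⟩ := mem_image.mp (mem_of_min hm)
  have hq₁ : q.1 ≤ n := (mem_placesA.mp (hB hq)).2.2
  simpa only [xiOf, hm, WithTop.untopD_coe, ordA_decode hq₁] using hq

theorem isCompClosedMod_placesA_sdiff : IsCompClosedMod M (placesA n \ M) := by
  intro a b c h₁ h₂
  rw [mem_sdiff, mem_placesA] at h₁ h₂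
  by_cases hac : (a, c) ∈ M
  · exact mem_union_right _ hac
  · exact mem_union_left _ (mem_sdiff.mpr ⟨mem_placesA.mpr (by simp only at *; omega), hac⟩)

section Step

variable (hB : B ⊆ placesA n)
include hB

theorem mem_minusSet_of_xiOf_eq {a b c : ℕ} (h₁ : (a, b) ∈ B) (h₂ : (b, c) ∈ B)
    (hξ : xiOf n B = (a, c)) : (a, b) ∈ minusSet n B := by
  have := mem_placesA.mp (hB h₁)
  have := mem_placesA.mp (hB h₂)
  simp only [minusSet, mem_filter, hξ, true_and]
  exact ⟨h₁, by omega, by omega, h₂⟩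

variable (hM : IsIdealSet n M) (hcl : IsCompClosedMod M B) (hξM : xiOf n B ∉ M)
include hM hcl hξM

theorem mem_minusSet_of_mem_minusSet_comp {a b c : ℕ} (h₁ : (a, b) ∈ B) (h₂ : (b, c) ∈ B)
    (hac : (a, c) ∈ minusSet n B) : (a, b) ∈ minusSet n B := by
  obtain ⟨-, ha, htc, -, hct⟩ := by simpa only [minusSet, mem_filter] using hac
  have := mem_placesA.mp (hB h₁)
  have := mem_placesA.mp (hB h₂)
  rcases mem_union.mp (hcl h₂ hct) with hbt | hbt
  · simp only [minusSet, mem_filter]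
    exact ⟨h₁, ha, by omega, by omega, hbt⟩
  · refine absurd ?_ hξM
    simpa only [ha] using hM.2.2 _ hbt a (by omega) (by omega)

theorem mem_plusSet_of_mem_plusSet_comp {a b c : ℕ} (h₁ : (a, b) ∈ B) (h₂ : (b, c) ∈ B)
    (hac : (a, c) ∈ plusSet n B) : (b, c) ∈ plusSet n B := by
  obtain ⟨-, hc, -, hak, hka⟩ := by simpa only [plusSet, mem_filter] using hac
  have := mem_placesA.mp (hB h₁)
  have := mem_placesA.mp (hB h₂)
  rcases mem_union.mp (hcl hka h₁) with hkb | hkb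
  · simp only [plusSet, mem_filter]
    exact ⟨h₂, hc, by omega, by omega, hkb⟩
  · refine absurd ?_ hξM
    simpa only [hc] using hM.2.1 _ hkb c (by omega) (by omega)

end Step

theorem IsCompClosedMod.sdiff_step (hB : B ⊆ placesA n \ M) (hM : IsIdealSet n M)
    (hcl : IsCompClosedMod M B) :
    IsCompClosedMod M (B \ insert (xiOf n B) (minusSet n B ∪ plusSet n B)) := by
  intro a b c h₁ h₂
  simp only [mem_sdiff, mem_insert, mem_union, not_or] at h₁ h₂
  obtain ⟨h₁, -, hab_minus, -⟩ := h₁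
  obtain ⟨h₂, -, -, hbc_plus⟩ := h₂
  have hBA : B ⊆ placesA n := hB.trans sdiff_subset
  have hξM : xiOf n B ∉ M := (mem_sdiff.mp (hB (xiOf_mem hBA ⟨_, h₁⟩))).2
  rcases mem_union.mp (hcl h₁ h₂) with hac | hac
  · refine mem_union_left _ (mem_sdiff.mpr ⟨hac, ?_⟩)
    simp only [mem_insert, mem_union, not_or]
    exact ⟨fun hξ => hab_minus (mem_minusSet_of_xiOf_eq hBA h₁ h₂ hξ.symm),
      fun h => hab_minus (mem_minusSet_of_mem_minusSet_comp hBA hM hcl hξM h₁ h₂ h),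
      fun h => hbc_plus (mem_plusSet_of_mem_plusSet_comp hBA hM hcl hξM h₁ h₂ h)⟩
  · exact mem_union_right _ hac

theorem isCompClosedMod_Bset (hM : IsIdealSet n M) (i : ℕ) : IsCompClosedMod M (Bset n M i) := by
  induction i with
  | zero => exact isCompClosedMod_placesA_sdiff
  | succ i ih => exact ih.sdiff_step (Bset_subset_placesA_sdiff i) hM

theorem lemma1_subalgebra_general (n : ℕ) (M : Finset (ℕ × ℕ))
    (hM : IsIdealSet n M) (i : ℕ) (a b c : ℕ)
    (h1 : (a, b) ∈ Bset n M i) (h2 : (b, c) ∈ Bset n M i) :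
    (a, c) ∈ Bset n M i ∪ M :=
  isCompClosedMod_Bset hM i h1 h2

/-- **Lemma 1** (combinatorial form).  For every `0 ≤ i ≤ s` the subspace
`𝔫_i = span{y_η : η ∈ A_i}` is a Lie subalgebra of `𝔫`; equivalently, if
`(a,b) ∈ B_i` and `(b,c) ∈ B_i` with `a > b > c`, then `(a,c) ∈ B_i ⊔ M`. -/
theorem lemma1_subalgebra (K : Type*) [Field K] [CharZero K]
    (n s : ℕ) (hn : 2 ≤ n) (M : Finset (ℕ × ℕ))
    (hM : IsIdealSet n M) (hs : IsNumSteps n M s)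
    (i : ℕ) (hi : i ≤ s)
    (a b c : ℕ) (hab : a > b) (hbc : b > c)
    (h1 : (a, b) ∈ Bset n M i) (h2 : (b, c) ∈ Bset n M i) :
    (a, c) ∈ Bset n M i ∪ M :=
  lemma1_subalgebra_general n M hM i a b c h1 h2

end Panov
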